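/- arXiv:1405.5816 — 2 statements merged into one kernel-verified Lean document; each statement's English description precedes it below -/
import Mathlib

section
/- At a Lebesgue density point z of a compact set K ⊂ ℂ, for every w in the ball B(z, r/2) with r sufficiently small, the Euclidean distance from w to K satisfies dist(w, K) ≤ r·ε(r)^{1/2}, where ε(r) = 1 - λ(B(z,r) ∩ K)/λ(B(z,r)). -/
open Set Metric Filter MeasureTheory

/-- `z` is a Lebesgue density point of `K ⊆ ℂ` (for planar Lebesgue measure). -/
def IsLebesgueDensityPoint (K : Set ℂ) (z : ℂ) : Prop :=
  Filter.Tendsto (fun r : ℝ =>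
      volume (K ∩ Metric.ball z r) / volume (Metric.ball z r))
    (nhdsWithin 0 (Set.Ioi 0)) (nhds 1)

/-- The density defect `ε(r) = 1 - λ(B(z,r) ∩ K)/λ(B(z,r))`. -/
noncomputable def densityDefect (K : Set ℂ) (z : ℂ) (r : ℝ) : ℝ :=
  1 - (volume (K ∩ Metric.ball z r) / volume (Metric.ball z r)).toReal

/-- At a Lebesgue density point `z` of a compact set `K ⊆ ℂ`, for all sufficiently
small `r` and every `w ∈ B(z, r/2)`, one has `dist(w, K) ≤ r · ε(r)^{1/2}` where
`ε(r)` is the density defect of `K` in `B(z, r)`. -/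
theorem density_point_dist_estimate (K : Set ℂ) (hK : IsCompact K)
    (z : ℂ) (hz : z ∈ K) (hdens : IsLebesgueDensityPoint K z) :
    ∃ r₀ > 0, ∀ r : ℝ, 0 < r → r < r₀ →
      ∀ w ∈ Metric.ball z (r / 2),
        Metric.infDist w K ≤ r * Real.sqrt (densityDefect K z r) := by
  refine ⟨1, one_pos, fun r hr _ w hw => ?_⟩
  by_contra hcon
  push_neg at hcon
  set ε := densityDefect K z r with hε
  set d := Metric.infDist w K with hdd
  have hKne : K.Nonempty := ⟨z, hz⟩
  have hd2 : d < r / 2 := lt_of_le_of_lt (Metric.infDist_le_dist_of_mem hz)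
    (Metric.mem_ball.mp hw)
  have hsqrt : (0:ℝ) ≤ r * Real.sqrt ε := by positivity
  set ρ := (r * Real.sqrt ε + d) / 2 with hρ
  have h1 : r * Real.sqrt ε < ρ := by rw [hρ]; linarith
  have h2 : ρ < d := by rw [hρ]; linarith
  have hρpos : 0 ≤ ρ := le_trans hsqrt h1.le
  -- ε is the relative complement measure
  set V := volume (Metric.ball z r) with hV
  set A := volume (K ∩ Metric.ball z r) with hA
  have hVfin : V ≠ ⊤ := (measure_ball_lt_top).ne
  have hVpos : 0 < V := Metric.measure_ball_pos _ _ hr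
  have hAV : A ≤ V := measure_mono inter_subset_right
  have hAfin : A ≠ ⊤ := (lt_of_le_of_lt hAV hVfin.lt_top).ne
  -- ball w ρ ⊆ ball z r \ K
  have hsub : Metric.ball w ρ ⊆ Metric.ball z r \ K := by
    intro x hx
    rw [Metric.mem_ball] at hx
    constructor
    · rw [Metric.mem_ball]
      have := dist_triangle x w z
      have hwz := Metric.mem_ball.mp hw
      calc dist x z ≤ dist x w + dist w z := dist_triangle x w z
        _ < ρ + r / 2 := by linarith
        _ ≤ r := by linarith
    · intro hxK
      have : d ≤ dist w x := Metric.infDist_le_dist_of_mem hxK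
      rw [dist_comm] at hx
      linarith
  have hvol : volume (Metric.ball w ρ) ≤ volume (Metric.ball z r \ K) :=
    measure_mono hsub
  have hdiff : Metric.ball z r \ K = Metric.ball z r \ (K ∩ Metric.ball z r) := by
    ext x; simp only [mem_diff, mem_inter_iff]; tauto
  have hmeas : volume (Metric.ball z r \ K) = V - A := by
    rw [hdiff]
    exact measure_diff inter_subset_right
      (hK.measurableSet.inter measurableSet_ball).nullMeasurableSet hAfin
  -- pass to reals
  have hεval : ε = 1 - A.toReal / V.toReal := by
    rw [hε, densityDefect, ENNReal.toReal_div]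
  have hεnonneg : 0 ≤ ε := by
    rw [hεval]
    have : A.toReal ≤ V.toReal := ENNReal.toReal_mono hVfin hAV
    have hVt : 0 < V.toReal := ENNReal.toReal_pos hVpos.ne' hVfin
    have : A.toReal / V.toReal ≤ 1 := by
      rw [div_le_one hVt]; exact this
    linarith
  have hrhs : (volume (Metric.ball z r \ K)).toReal = ε * (V.toReal) := by
    rw [hmeas, ENNReal.toReal_sub_of_le hAV hVfin, hεval]
    have hVt : 0 < V.toReal := ENNReal.toReal_pos hVpos.ne' hVfin
    field_simp
  have hfin2 : volume (Metric.ball z r \ K) ≠ ⊤ := by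
    rw [hmeas]; exact (lt_of_le_of_lt tsub_le_self hVfin.lt_top).ne
  have hreal : (volume (Metric.ball w ρ)).toReal ≤ ε * V.toReal := by
    rw [← hrhs]
    exact ENNReal.toReal_mono hfin2 hvol
  have hball1 : (volume (Metric.ball w ρ)).toReal = ρ ^ 2 * Real.pi := by
    rw [Complex.volume_ball, ENNReal.toReal_mul, ← ENNReal.ofReal_pow hρpos,
      ENNReal.toReal_ofReal (by positivity)]
    simp [NNReal.coe_real_pi]
  have hball2 : V.toReal = r ^ 2 * Real.pi := by
    rw [hV, Complex.volume_ball, ENNReal.toReal_mul, ← ENNReal.ofReal_pow hr.le,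
      ENNReal.toReal_ofReal (by positivity)]
    simp [NNReal.coe_real_pi]
  have hsq : r ^ 2 * ε < ρ ^ 2 := by
    have : (r * Real.sqrt ε) ^ 2 < ρ ^ 2 := by
      apply pow_lt_pow_left₀ h1 hsqrt
      norm_num
    calc r ^ 2 * ε = (r * Real.sqrt ε) ^ 2 := by
          rw [mul_pow, Real.sq_sqrt hεnonneg]
      _ < ρ ^ 2 := this
  rw [hball1, hball2] at hreal
  nlinarith [Real.pi_pos]
end

section
/- Let K ⊂ ℂ be a compact set such that the Riemann surface ℂ̄ \ K belongs to the class O_AD (admits no non-constant holomorphic functions with finite Dirichlet integral). Then any injective holomorphic map (univalent function) f : ℂ̄ \ K → ℂ̄ is the restriction of a Möbius transformation. -/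
/-!
Fix `p ∉ K` with `f'(p) ≠ 0` and put `F z = (f z - f p)⁻¹ - (f'(p) (z - p))⁻¹`, which is
holomorphic on `ℂ \ K` once its removable singularity at `p` is filled in. Away from a small
disc around `p`, `(f - f p)⁻¹` is injective with bounded image, so by the area formula its
Dirichlet integral is the (finite) area of that image, while `(z - p)⁻¹` has `|d/dz|² ~ |z - p|⁻⁴`,
integrable at infinity; on the disc itself `F'` is continuous. So `F` has finite Dirichlet
integral, hence is a constant `C`, and `(f z - f p)⁻¹ = C + (f'(p) (z - p))⁻¹` is Möbius.
-/

open Set MeasureTheory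

/-- The Riemann surface `ℂ̄ \ K` is in the class `O_AD`: every holomorphic function on
the complement of `K` with finite Dirichlet integral is constant. -/
def IsOAD (K : Set ℂ) : Prop :=
  ∀ F : ℂ → ℂ, DifferentiableOn ℂ F Kᶜ →
    IntegrableOn (fun z => ‖deriv F z‖ ^ 2) Kᶜ volume →
    ∀ z ∈ Kᶜ, ∀ w ∈ Kᶜ, F z = F w

open Metric Filter Topology

theorem det_restrictScalars_toSpanSingleton (c : ℂ) :
    ((ContinuousLinearMap.toSpanSingleton ℂ c).restrictScalars ℝ).det = ‖c‖ ^ 2 := by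
  simp [ContinuousLinearMap.det, LinearMap.det_restrictScalars, Algebra.norm_complex_eq,
    Complex.normSq_eq_norm_sq]

theorem lintegral_norm_deriv_sq_eq_volume_image {S : Set ℂ} (hS : MeasurableSet S) {u : ℂ → ℂ}
    (hu : ∀ z ∈ S, DifferentiableAt ℂ u z) (hinj : InjOn u S) :
    ∫⁻ z in S, ENNReal.ofReal (‖deriv u z‖ ^ 2) = volume (u '' S) := by
  have hder : ∀ z ∈ S, HasFDerivWithinAt u
      ((ContinuousLinearMap.toSpanSingleton ℂ (deriv u z)).restrictScalars ℝ) S z :=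
    fun z hz => ((hu z hz).hasDerivAt.hasFDerivAt.restrictScalars ℝ).hasFDerivWithinAt
  rw [← setLIntegral_one, lintegral_image_eq_lintegral_abs_det_fderiv_mul volume hS hder hinj]
  simp [det_restrictScalars_toSpanSingleton]

theorem integrableOn_norm_deriv_sq_of_injOn {S : Set ℂ} (hS : MeasurableSet S) {u : ℂ → ℂ}
    (hu : ∀ z ∈ S, DifferentiableAt ℂ u z) (hinj : InjOn u S)
    (hbdd : Bornology.IsBounded (u '' S)) :
    IntegrableOn (fun z => ‖deriv u z‖ ^ 2) S := by
  refine ⟨((measurable_deriv u).norm.pow_const 2).aestronglyMeasurable, ?_⟩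
  rw [hasFiniteIntegral_iff_ofReal (ae_of_all _ fun z => by positivity),
    lintegral_norm_deriv_sq_eq_volume_image hS hu hinj]
  exact hbdd.measure_lt_top

theorem integrableOn_compl_ball_inv_norm_sub_pow {E : Type*} [NormedAddCommGroup E]
    [NormedSpace ℝ E] [FiniteDimensional ℝ E] [MeasurableSpace E] [BorelSpace E]
    {μ : Measure E} [μ.IsAddHaarMeasure] (p : E) {n : ℕ} (hn : Module.finrank ℝ E < n)
    {ε : ℝ} (hε : 0 < ε) :
    IntegrableOn (fun x => (‖x - p‖ ^ n)⁻¹) (ball p ε)ᶜ μ := by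
  have hint : Integrable (fun x => ((1 + ε) / ε) ^ n * (1 + ‖x - p‖) ^ (-(n : ℝ))) μ :=
    ((integrable_one_add_norm (by exact_mod_cast hn)).comp_sub_right p).const_mul _
  refine hint.integrableOn.mono' (by fun_prop) ((ae_restrict_iff' measurableSet_ball.compl).2
    (ae_of_all _ fun x hx => ?_))
  have hεx : ε ≤ ‖x - p‖ := by simpa [dist_eq_norm] using hx
  have hx0 : 0 < ‖x - p‖ := hε.trans_le hεx
  rw [Real.rpow_neg (by positivity), Real.rpow_natCast, norm_inv, norm_pow, norm_norm, ← inv_pow,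
    ← inv_pow, ← mul_pow]
  refine pow_le_pow_left₀ (by positivity) ?_ n
  rw [← div_eq_mul_inv, div_div, inv_eq_one_div, div_le_div_iff₀ hx0 (by positivity)]
  nlinarith

theorem integrable_norm_sub_sq {α E : Type*} [MeasurableSpace α] {μ : Measure α}
    [NormedAddCommGroup E] {φ ψ : α → E} (hφm : AEStronglyMeasurable φ μ)
    (hψm : AEStronglyMeasurable ψ μ) (hφ : Integrable (fun x => ‖φ x‖ ^ 2) μ)
    (hψ : Integrable (fun x => ‖ψ x‖ ^ 2) μ) :
    Integrable (fun x => ‖φ x - ψ x‖ ^ 2) μ :=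
  (memLp_two_iff_integrable_sq_norm (hφm.sub hψm)).1
    (((memLp_two_iff_integrable_sq_norm hφm).2 hφ).sub
      ((memLp_two_iff_integrable_sq_norm hψm).2 hψ))

theorem integrableOn_compl_closedBall_norm_deriv_const_mul_inv_sq (c p : ℂ) {ε : ℝ} (hε : 0 < ε) :
    IntegrableOn (fun z => ‖deriv (fun w => c * (w - p)⁻¹) z‖ ^ 2) (closedBall p ε)ᶜ := by
  have hderiv : ∀ z ∈ (closedBall p ε)ᶜ,
      ‖deriv (fun w => c * (w - p)⁻¹) z‖ ^ 2 = ‖c‖ ^ 2 * (‖z - p‖ ^ 4)⁻¹ := by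
    intro z hz
    have hzp : z - p ≠ 0 := sub_ne_zero.2 fun h => hz (h ▸ mem_closedBall_self hε.le)
    have hd : HasDerivAt (fun w => c * (w - p)⁻¹) (c * (-1 / (z - p) ^ 2)) z :=
      (((hasDerivAt_id' z).sub_const p).inv hzp).const_mul c
    rw [hd.deriv, norm_mul, norm_div, norm_neg, norm_one, norm_pow]
    ring
  refine IntegrableOn.congr_fun ?_ (fun z hz => (hderiv z hz).symm) measurableSet_closedBall.compl
  refine ((integrableOn_compl_ball_inv_norm_sub_pow p ?_ hε).mono_set
    (compl_subset_compl.2 ball_subset_closedBall)).const_mul _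
  rw [Complex.finrank_real_complex]
  norm_num

theorem not_eventually_eq_of_injOn {X Y : Type*} [TopologicalSpace X] {U : Set X} {f : X → Y}
    {p : X} [(𝓝[≠] p).NeBot] (hU : U ∈ 𝓝 p) (hinj : InjOn f U) :
    ¬ ∀ᶠ z in 𝓝 p, f z = f p := by
  intro h
  obtain ⟨z, ⟨hfz, hzU⟩, hzp⟩ := (((h.and hU).filter_mono nhdsWithin_le_nhds).and
    (self_mem_nhdsWithin : {p}ᶜ ∈ 𝓝[≠] p)).exists
  exact hzp (hinj hzU (mem_of_mem_nhds hU) hfz)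

section InjOn

variable {U : Set ℂ} {f : ℂ → ℂ} {p : ℂ}

theorem nhds_le_map_nhds_of_injOn (hU : IsOpen U) (hf : DifferentiableOn ℂ f U)
    (hinj : InjOn f U) (hp : p ∈ U) : 𝓝 (f p) ≤ map f (𝓝 p) :=
  (hf.analyticAt (hU.mem_nhds hp)).eventually_constant_or_nhds_le_map_nhds.resolve_left
    (not_eventually_eq_of_injOn (hU.mem_nhds hp) hinj)

theorem exists_pos_le_norm_sub_of_injOn (hU : IsOpen U) (hf : DifferentiableOn ℂ f U)
    (hinj : InjOn f U) (hp : p ∈ U) {s : Set ℂ} (hs : s ∈ 𝓝 p) :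
    ∃ δ > 0, ∀ z ∈ U \ s, δ ≤ ‖f z - f p‖ := by
  have hnhds : f '' (U ∩ s) ∈ 𝓝 (f p) :=
    nhds_le_map_nhds_of_injOn hU hf hinj hp (image_mem_map (inter_mem (hU.mem_nhds hp) hs))
  obtain ⟨δ, hδ, hsub⟩ := Metric.mem_nhds_iff.1 hnhds
  refine ⟨δ, hδ, fun z ⟨hzU, hz⟩ => not_lt.1 fun hlt => ?_⟩
  obtain ⟨w, ⟨hwU, hw⟩, hfw⟩ := hsub (mem_ball_iff_norm.2 hlt)
  exact hz (hinj hwU hzU hfw ▸ hw)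

theorem exists_deriv_ne_zero_of_injOn (hU : IsOpen U) (hf : DifferentiableOn ℂ f U)
    (hinj : InjOn f U) {q : ℂ} (hq : q ∈ U) : ∃ p ∈ U, deriv f p ≠ 0 := by
  by_contra! h
  obtain ⟨r, hr, hball⟩ := Metric.isOpen_iff.1 hU q hq
  refine not_eventually_eq_of_injOn (hU.mem_nhds hq) hinj ?_
  filter_upwards [ball_mem_nhds q hr] with z hz
  exact isOpen_ball.is_const_of_deriv_eq_zero (convex_ball q r).isPreconnected (hf.mono hball)
    (fun w hw => h w (hball hw)) hz (mem_ball_self hr)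

theorem integrableOn_diff_closedBall_norm_deriv_inv_sub_sq (hU : IsOpen U)
    (hf : DifferentiableOn ℂ f U) (hinj : InjOn f U) (hp : p ∈ U) {ε : ℝ} (hε : 0 < ε) :
    IntegrableOn (fun z => ‖deriv (fun w => (f w - f p)⁻¹) z‖ ^ 2) (U \ closedBall p ε) := by
  obtain ⟨δ, hδ, hlow⟩ := exists_pos_le_norm_sub_of_injOn hU hf hinj hp (closedBall_mem_nhds p hε)
  have hne : ∀ z ∈ U \ closedBall p ε, f z - f p ≠ 0 :=
    fun z hz => norm_pos_iff.1 (hδ.trans_le (hlow z hz))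
  refine integrableOn_norm_deriv_sq_of_injOn (hU.sdiff isClosed_closedBall).measurableSet
    (fun z hz => ((hf.differentiableAt (hU.mem_nhds hz.1)).sub_const _).inv (hne z hz))
    (fun x hx y hy hxy => hinj hx.1 hy.1 (sub_left_injective (inv_injective hxy))) ?_
  refine (isBounded_closedBall (x := 0) (r := δ⁻¹)).subset ?_
  rintro _ ⟨z, hz, rfl⟩
  rw [mem_closedBall_zero_iff, norm_inv]
  exact inv_anti₀ hδ (hlow z hz)

/-- The function `(f z - f p)⁻¹ - (f'(p) (z - p))⁻¹`, with its removable singularity at `p`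
filled in. -/
noncomputable def moebiusDefect (f : ℂ → ℂ) (p z : ℂ) : ℂ :=
  -dslope (dslope f p) p z / (deriv f p * dslope f p z)

theorem moebiusDefect_eq {z : ℂ} (ha : deriv f p ≠ 0) (hz : z ≠ p) (hfz : f z ≠ f p) :
    moebiusDefect f p z = (f z - f p)⁻¹ - (deriv f p)⁻¹ * (z - p)⁻¹ := by
  have hg := sub_smul_dslope f p z
  have hh := sub_smul_dslope (dslope f p) p z
  rw [dslope_same, smul_eq_mul] at hh
  rw [smul_eq_mul] at hg
  have hzp : z - p ≠ 0 := sub_ne_zero.2 hz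
  have hfzp : f z - f p ≠ 0 := sub_ne_zero.2 hfz
  have hg0 : dslope f p z ≠ 0 := by rintro h; rw [h, mul_zero] at hg; exact hfzp hg.symm
  rw [moebiusDefect, ← hg]
  field_simp
  linear_combination -hh

theorem dslope_ne_zero_of_injOn (hinj : InjOn f U) (hp : p ∈ U) (ha : deriv f p ≠ 0) {z : ℂ}
    (hz : z ∈ U) : dslope f p z ≠ 0 := by
  rcases eq_or_ne z p with rfl | hzp
  · rwa [dslope_same]
  · rw [dslope_of_ne _ hzp, slope_def_field]
    exact div_ne_zero (sub_ne_zero.2 (hinj.ne hz hp hzp)) (sub_ne_zero.2 hzp)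

theorem differentiableOn_moebiusDefect (hU : IsOpen U) (hf : DifferentiableOn ℂ f U)
    (hinj : InjOn f U) (hp : p ∈ U) (ha : deriv f p ≠ 0) :
    DifferentiableOn ℂ (moebiusDefect f p) U := by
  have hg : DifferentiableOn ℂ (dslope f p) U :=
    (Complex.differentiableOn_dslope (hU.mem_nhds hp)).2 hf
  have hh := (Complex.differentiableOn_dslope (hU.mem_nhds hp)).2 hg
  exact hh.neg.div ((differentiableOn_const _).mul hg)
    fun z hz => mul_ne_zero ha (dslope_ne_zero_of_injOn hinj hp ha hz)

theorem integrableOn_norm_deriv_moebiusDefect_sq (hU : IsOpen U) (hf : DifferentiableOn ℂ f U)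
    (hinj : InjOn f U) (hp : p ∈ U) (ha : deriv f p ≠ 0) :
    IntegrableOn (fun z => ‖deriv (moebiusDefect f p) z‖ ^ 2) U := by
  obtain ⟨ε, hε, hεU⟩ := nhds_basis_closedBall.mem_iff.1 (hU.mem_nhds hp)
  have hnear : IntegrableOn (fun z => ‖deriv (moebiusDefect f p) z‖ ^ 2) (closedBall p ε) :=
    (((differentiableOn_moebiusDefect hU hf hinj hp ha).deriv hU).continuousOn.norm.pow 2
      |>.mono hεU).integrableOn_compact (isCompact_closedBall p ε)
  have hS : IsOpen (U \ closedBall p ε) := hU.sdiff isClosed_closedBall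
  have hne : ∀ w ∈ U \ closedBall p ε, w ≠ p :=
    fun w hw h => hw.2 (h ▸ mem_closedBall_self hε.le)
  have hsplit : ∀ z ∈ U \ closedBall p ε, deriv (moebiusDefect f p) z =
      deriv (fun w => (f w - f p)⁻¹) z - deriv (fun w => (deriv f p)⁻¹ * (w - p)⁻¹) z := by
    intro z hz
    have heq : moebiusDefect f p =ᶠ[𝓝 z] fun w => (f w - f p)⁻¹ - (deriv f p)⁻¹ * (w - p)⁻¹ :=
      eventually_of_mem (hS.mem_nhds hz) fun w hw =>
        moebiusDefect_eq ha (hne w hw) (hinj.ne hw.1 hp (hne w hw))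
    rw [heq.deriv_eq, deriv_fun_sub]
    · exact ((hf.differentiableAt (hU.mem_nhds hz.1)).sub_const _).inv
        (sub_ne_zero.2 (hinj.ne hz.1 hp (hne z hz)))
    · exact ((differentiableAt_id.sub_const p).inv (sub_ne_zero.2 (hne z hz))).const_mul _
  have hfar : IntegrableOn (fun z => ‖deriv (moebiusDefect f p) z‖ ^ 2) (U \ closedBall p ε) :=
    IntegrableOn.congr_fun (integrable_norm_sub_sq (measurable_deriv _).aestronglyMeasurable
      (measurable_deriv _).aestronglyMeasurable
      (integrableOn_diff_closedBall_norm_deriv_inv_sub_sq hU hf hinj hp hε)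
      ((integrableOn_compl_closedBall_norm_deriv_const_mul_inv_sq (deriv f p)⁻¹ p hε).mono_set
        (sdiff_subset_compl _ _))) (fun z hz => by rw [hsplit z hz]) hS.measurableSet
  rw [← inter_union_sdiff U (closedBall p ε)]
  exact (hnear.mono_set inter_subset_right).union hfar

theorem exists_moebius_of_moebiusDefect_eq (ha : deriv f p ≠ 0)
    (hg : ∀ z ∈ U, dslope f p z ≠ 0) {C : ℂ} (hC : ∀ z ∈ U, moebiusDefect f p z = C) :
    ∃ a b c d : ℂ, a * d - b * c ≠ 0 ∧ ∀ z ∈ U, f z * (c * z + d) = a * z + b := by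
  set a := deriv f p
  -- solve `(f z - f p)⁻¹ = C + (a (z - p))⁻¹` for `f z`; the determinant is `a`
  refine ⟨a + f p * (C * a), f p * (1 - C * a * p) - a * p, C * a, 1 - C * a * p,
    by ring_nf; exact ha, fun z hz => ?_⟩
  have hf : (z - p) * dslope f p z = f z - f p := by
    simpa only [smul_eq_mul] using sub_smul_dslope f p z
  have hg' : (z - p) * dslope (dslope f p) p z = dslope f p z - a := by
    simpa only [smul_eq_mul, dslope_same] using sub_smul_dslope (dslope f p) p z
  have hCz : -dslope (dslope f p) p z = C * (a * dslope f p z) :=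
    (div_eq_iff (mul_ne_zero ha (hg z hz))).1 (hC z hz)
  linear_combination -(C * a * z + 1 - C * a * p) * hf - (z - p) * hg' - (z - p) ^ 2 * hCz

end InjOn

/-- Rigidity of `O_AD` complements (Ahlfors–Beurling): if `ℂ̄ \ K` is in class `O_AD`,
then every univalent (injective holomorphic) function on the complement of `K` is the
restriction of a Möbius transformation. -/
theorem OAD_univalent_is_moebius (K : Set ℂ) (hK : IsCompact K) (hOAD : IsOAD K)
    (f : ℂ → ℂ) (hf : DifferentiableOn ℂ f Kᶜ) (hinj : Set.InjOn f Kᶜ) :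
    ∃ a b c d : ℂ, a * d - b * c ≠ 0 ∧
      ∀ z ∈ Kᶜ, f z * (c * z + d) = a * z + b := by
  have hU : IsOpen Kᶜ := hK.isClosed.isOpen_compl
  obtain ⟨q, hq⟩ : Kᶜ.Nonempty := nonempty_compl.2 hK.ne_univ
  obtain ⟨p, hp, ha⟩ := exists_deriv_ne_zero_of_injOn hU hf hinj hq
  have hconst : ∀ z ∈ Kᶜ, moebiusDefect f p z = moebiusDefect f p p := fun z hz =>
    hOAD _ (differentiableOn_moebiusDefect hU hf hinj hp ha)
      (integrableOn_norm_deriv_moebiusDefect_sq hU hf hinj hp ha) z hz p hp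
  exact exists_moebius_of_moebiusDefect_eq ha (fun z hz => dslope_ne_zero_of_injOn hinj hp ha hz)
    hconst
end
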